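/- For μ_n = δ_{(−n,n)} and ν_n = δ_{(−n−1/ln n, n+1/ln n)} (n ≥ 2), the Figalli–Gigli distance satisfies FG_p(μ_n, ν_n) = √2/ln(n), hence FG_p(μ_n,ν_n) → 0 as n → ∞, while d((−n,n),Δ) = √2 n → ∞. -/

import Mathlib

/-- The Figalli–Gigli distance between the two Dirac masses
`μ_n = δ_{(−n,n)}` and `ν_n = δ_{(−n−1/ln n, n+1/ln n)}`:
`FG_p(δ_x,δ_y) = min(‖x−y‖^p, d(x,Δ)^p + d(y,Δ)^p)^{1/p}` with `d(z,Δ) = (z2−z1)/√2`. -/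
-- `FG_p(δ_x, δ_y)`: either transport `x` to `y`, or send both to the diagonal.
noncomputable def fgDiracs (p : ℝ) (n : ℕ) : ℝ :=
  (min ((Real.sqrt ((((-n : ℝ)) - (-(n : ℝ) - 1 / Real.log n)) ^ 2 +
          ((n : ℝ) - ((n : ℝ) + 1 / Real.log n)) ^ 2)) ^ p)
      ((((n : ℝ) - (-(n : ℝ))) / Real.sqrt 2) ^ p +
        ((((n : ℝ) + 1 / Real.log n) - (-(n : ℝ) - 1 / Real.log n)) / Real.sqrt 2) ^ p)) ^ (1 / p)

/-! For single Diracs the Figalli–Gigli cost is the cheaper of transporting `x` to `y` and sending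
both points to the diagonal. Here the direct cost `√2 / ln n` is already below `d(x, Δ) = √2 n`,
because `1 / ln n ≤ n`. -/

open Real Filter

namespace FigalliGigli

-- `dist` on `ℝ × ℝ` is the sup distance, so the Euclidean one is spelled out.
noncomputable def planeDist (x y : ℝ × ℝ) : ℝ := √((x.1 - y.1) ^ 2 + (x.2 - y.2) ^ 2)

-- `d(z, Δ)` for `z` above the diagonal.
noncomputable def diagDist (z : ℝ × ℝ) : ℝ := (z.2 - z.1) / √2

-- `FG_p(δ_x, δ_y)`: either transport `x` to `y`, or send both to the diagonal.
noncomputable def fgDirac (p : ℝ) (x y : ℝ × ℝ) : ℝ :=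
  (min (planeDist x y ^ p) (diagDist x ^ p + diagDist y ^ p)) ^ (1 / p)

theorem fgDirac_eq_planeDist {p : ℝ} {x y : ℝ × ℝ} (hp : 0 < p)
    (hx : planeDist x y ≤ diagDist x) (hy : 0 ≤ diagDist y) :
    fgDirac p x y = planeDist x y := by
  have hxy : 0 ≤ planeDist x y := sqrt_nonneg _
  have hmin : planeDist x y ^ p ≤ diagDist x ^ p + diagDist y ^ p := by
    have := rpow_le_rpow hxy hx hp.le
    have := rpow_nonneg hy p
    linarith
  rw [fgDirac, min_eq_left hmin, ← rpow_mul hxy, mul_one_div_cancel hp.ne', rpow_one]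

theorem planeDist_sub_add (x : ℝ × ℝ) (t : ℝ) :
    planeDist x (x.1 - t, x.2 + t) = √2 * |t| := by
  rw [planeDist, ← sqrt_sq_eq_abs, ← sqrt_mul zero_le_two]
  ring_nf

theorem diagDist_sub_add (x : ℝ × ℝ) (t : ℝ) :
    diagDist (x.1 - t, x.2 + t) = diagDist x + √2 * t := by
  have hsqrt : (√2)⁻¹ * 2 = √2 := by rw [inv_mul_eq_div, div_sqrt]
  simp only [diagDist]
  linear_combination t * hsqrt

theorem diagDist_neg_self (a : ℝ) : diagDist (-a, a) = √2 * a := by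
  rw [diagDist, sub_neg_eq_add, ← two_mul, mul_div_right_comm, div_sqrt]

end FigalliGigli

open FigalliGigli

theorem one_div_log_le_self {x : ℝ} (hx : 2 ≤ x) : 1 / log x ≤ x := by
  have hlog2 : 1 / 2 < log 2 := by linarith [log_two_gt_d9]
  have hlog : log 2 ≤ log x := log_le_log two_pos hx
  rw [div_le_iff₀ (by linarith)]
  nlinarith

theorem fgDiracs_eq {p : ℝ} (hp : 0 < p) {n : ℕ} (hn : 2 ≤ n) :
    fgDiracs p n = √2 / log n := by
  have hn' : (2 : ℝ) ≤ n := by exact_mod_cast hn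
  have ht : 0 < 1 / log n := one_div_pos.2 (log_pos (by linarith))
  have hdist : planeDist (-(n : ℝ), n) (-(n : ℝ) - 1 / log n, n + 1 / log n) = √2 / log n := by
    rw [planeDist_sub_add (-(n : ℝ), (n : ℝ)), abs_of_pos ht, mul_one_div]
  change fgDirac p (-(n : ℝ), n) (-(n : ℝ) - 1 / log n, n + 1 / log n) = _
  rw [fgDirac_eq_planeDist hp, hdist]
  · rw [hdist, diagDist_neg_self, ← mul_one_div]
    gcongr
    exact one_div_log_le_self hn'
  · rw [diagDist_sub_add (-(n : ℝ), (n : ℝ)), diagDist_neg_self]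
    positivity

/-- For `μ_n = δ_{(−n,n)}` and `ν_n = δ_{(−n−1/ln n, n+1/ln n)}` (`n ≥ 2`), one has
`FG_p(μ_n,ν_n) = √2/ln n`, hence `FG_p(μ_n,ν_n) → 0` as `n → ∞`, while
`d((−n,n),Δ) = √2·n → ∞`. -/
theorem stmt13 (p : ℝ) (hp : 1 ≤ p) :
    (∀ n : ℕ, 2 ≤ n → fgDiracs p n = Real.sqrt 2 / Real.log n) ∧
    Filter.Tendsto (fun n : ℕ => fgDiracs p n) Filter.atTop (nhds 0) ∧
    Filter.Tendsto (fun n : ℕ => Real.sqrt 2 * (n : ℝ)) Filter.atTop Filter.atTop := by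
  have hp0 : 0 < p := by linarith
  have hlog : Tendsto (fun n : ℕ => log n) atTop atTop :=
    tendsto_log_atTop.comp tendsto_natCast_atTop_atTop
  refine ⟨fun n hn => fgDiracs_eq hp0 hn, ?_,
    tendsto_natCast_atTop_atTop.const_mul_atTop (by positivity)⟩
  refine ((tendsto_const_nhds (x := √2)).div_atTop hlog).congr' ?_
  filter_upwards [eventually_ge_atTop 2] with n hn
  exact (fgDiracs_eq hp0 hn).symm
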